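/- There exists an unpredictable point of the Bernoulli shift σ on Σ₂: a point s ∈ Σ₂, a constant ε₀ > 0, and sequences of positive integers {α_n}, {β_n} diverging to infinity such that d(σ^{α_n}(s), s) → 0 as n → ∞ and d(σ^{α_n + β_n}(s), σ^{β_n}(s)) ≥ ε₀ for all n. -/

import Mathlib

open Filter Topology

noncomputable def dSigma (s t : ℕ → Fin 2) : ℝ :=
  ∑' k : ℕ, |((s k : ℝ)) - ((t k : ℝ))| / 2 ^ k

def shift (s : ℕ → Fin 2) : ℕ → Fin 2 := fun k => s (k + 1)

/-!
The Thue–Morse sequence `t` (parity of the binary digit sum) is such a point. For `k < 2ⁿ` one has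
`t (k + 2ⁿ m) = t k + t m`, and `t 3 = 0`, so shifting by `αₙ = 3·2ⁿ` leaves the first `2ⁿ`
symbols of `t` unchanged and `σ^{αₙ} t → t`. With `βₙ = 2·2ⁿ`, the sequences `σ^{αₙ+βₙ} t` and
`σ^{βₙ} t` start with `t (5·2ⁿ) = t 5 = 0` and `t (2·2ⁿ) = t 2 = 1`, so they are at distance `≥ 1`.
-/

namespace Nat

theorem digits_sum_add_base_pow_mul {b n k : ℕ} (hb : 1 < b) (hk : k < b ^ n) (m : ℕ) :
    (b.digits (k + b ^ n * m)).sum = (b.digits k).sum + (b.digits m).sum := by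
  rcases m.eq_zero_or_pos with rfl | hm
  · simp
  have hlen : (b.digits k).length ≤ n := (digits_length_le_iff hb k).2 hk
  rw [← Nat.add_sub_cancel' hlen, ← digits_append_zeroes_append_digits hb hm]
  simp

end Nat

section ThueMorse

open Fin.NatCast

def thueMorse (m : ℕ) : Fin 2 := ↑(Nat.digits 2 m).sum

theorem thueMorse_add_two_pow_mul {n k : ℕ} (hk : k < 2 ^ n) (m : ℕ) :
    thueMorse (k + 2 ^ n * m) = thueMorse k + thueMorse m := by
  simp only [thueMorse, Nat.digits_sum_add_base_pow_mul one_lt_two hk, Nat.cast_add]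

theorem thueMorse_two_pow_mul (n m : ℕ) : thueMorse (2 ^ n * m) = thueMorse m := by
  simpa [thueMorse] using thueMorse_add_two_pow_mul (Nat.two_pow_pos n) m

theorem thueMorse_add_two_pow_mul_three {n k : ℕ} (hk : k < 2 ^ n) :
    thueMorse (k + 2 ^ n * 3) = thueMorse k := by
  rw [thueMorse_add_two_pow_mul hk, show thueMorse 3 = 0 by simp [thueMorse], add_zero]

theorem thueMorse_two_pow_mul_five_ne (n : ℕ) : thueMorse (2 ^ n * 5) ≠ thueMorse (2 ^ n * 2) := by
  rw [thueMorse_two_pow_mul, thueMorse_two_pow_mul]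
  simp [thueMorse]

end ThueMorse

theorem shift_iterate_apply (s : ℕ → Fin 2) (m k : ℕ) : shift^[m] s k = s (k + m) := by
  induction m generalizing s with
  | zero => rfl
  | succ m ih => rw [Function.iterate_succ_apply, ih]; rfl

section dSigma

variable (u v : ℕ → Fin 2)

theorem abs_sub_fin_two_le_one (a b : Fin 2) : |(a : ℝ) - b| ≤ 1 := by
  fin_cases a <;> fin_cases b <;> norm_num

theorem summable_dSigma : Summable fun k ↦ |(u k : ℝ) - v k| / 2 ^ k :=
  summable_geometric_two.of_nonneg_of_le (fun k ↦ by positivity) fun k ↦ by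
    rw [div_pow, one_pow]
    gcongr
    exact abs_sub_fin_two_le_one _ _

theorem dSigma_nonneg : 0 ≤ dSigma u v :=
  tsum_nonneg fun k ↦ by positivity

theorem one_le_dSigma_of_apply_zero_ne (h : u 0 ≠ v 0) : 1 ≤ dSigma u v := by
  have h0 : |(u 0 : ℝ) - v 0| / 2 ^ 0 = 1 := by
    revert h; generalize u 0 = a; generalize v 0 = b
    fin_cases a <;> fin_cases b <;> norm_num
  exact h0.symm.le.trans ((summable_dSigma u v).le_tsum 0 fun k _ ↦ by positivity)

theorem dSigma_le_of_forall_lt_eq {N : ℕ} (h : ∀ k < N, u k = v k) :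
    dSigma u v ≤ 2 * 2⁻¹ ^ N := by
  have hle : ∀ k, |(u k : ℝ) - v k| / 2 ^ k ≤ if N ≤ k then (2⁻¹ : ℝ) ^ k else 0 := by
    intro k
    split_ifs with hk
    · rw [inv_pow, div_eq_mul_inv]
      exact mul_le_of_le_one_left (by positivity) (abs_sub_fin_two_le_one _ _)
    · simp [h k (not_le.1 hk)]
  rw [← tsum_geometric_inv_two_ge]
  refine (summable_dSigma u v).tsum_le_tsum hle ?_
  refine summable_geometric_two.of_nonneg_of_le (fun k ↦ by positivity) fun k ↦ ?_
  split_ifs <;> simp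

theorem tendsto_dSigma_nhds_zero {ι : Type*} {l : Filter ι} {u v : ι → ℕ → Fin 2} {N : ι → ℕ}
    (hN : Tendsto N l atTop) (h : ∀ i, ∀ k < N i, u i k = v i k) :
    Tendsto (fun i ↦ dSigma (u i) (v i)) l (𝓝 0) := by
  have hgeom : Tendsto (fun m : ℕ ↦ 2 * (2⁻¹ : ℝ) ^ m) atTop (𝓝 0) := by
    simpa using (tendsto_pow_atTop_nhds_zero_of_lt_one (r := (2⁻¹ : ℝ))
      (by norm_num) (by norm_num)).const_mul 2
  exact squeeze_zero (fun i ↦ dSigma_nonneg _ _)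
    (fun i ↦ dSigma_le_of_forall_lt_eq _ _ (h i)) (hgeom.comp hN)

end dSigma

/-- there exists an unpredictable point of the Bernoulli shift on `Σ₂`. -/
theorem exists_unpredictable_point_bernoulli :
    ∃ s : ℕ → Fin 2, ∃ ε₀ > (0 : ℝ), ∃ α β : ℕ → ℕ,
      (∀ n, 0 < α n) ∧ (∀ n, 0 < β n) ∧
      Tendsto α atTop atTop ∧ Tendsto β atTop atTop ∧
      Tendsto (fun n => dSigma (shift^[α n] s) s) atTop (𝓝 0) ∧
      ∀ n, ε₀ ≤ dSigma (shift^[α n + β n] s) (shift^[β n] s) := by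
  have hpow : Tendsto (fun n : ℕ ↦ 2 ^ n) atTop atTop :=
    tendsto_pow_atTop_atTop_of_one_lt one_lt_two
  refine ⟨thueMorse, 1, one_pos, fun n ↦ 2 ^ n * 3, fun n ↦ 2 ^ n * 2,
    fun n ↦ by positivity, fun n ↦ by positivity,
    hpow.atTop_mul_const' three_pos, hpow.atTop_mul_const' two_pos, ?_, fun n ↦ ?_⟩
  · refine tendsto_dSigma_nhds_zero hpow fun n k hk ↦ ?_
    rw [shift_iterate_apply, thueMorse_add_two_pow_mul_three hk]
  · apply one_le_dSigma_of_apply_zero_ne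
    rw [shift_iterate_apply, shift_iterate_apply, zero_add, zero_add, ← mul_add]
    exact thueMorse_two_pow_mul_five_ne n
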